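/- Let K be a field, X a finite nonempty alphabet, G a subgroup of K×, and ℓ : G → ℝ≥0 a length function (ℓ(1) = 0, ℓ(gh) ≤ ℓ(g) + ℓ(h), ℓ(g⁻¹) = ℓ(g)) such that for every C ≥ 0 the set { g ∈ G : ℓ(g) ≤ C } is finite. Let S : X* → K be a rational series with S(w) ∈ G ∪ {0} for all w ∈ X*, and suppose S has bounded ℓ-variation: for every c ≥ 0 there exists C ≥ 0 such that for all words w, w' with S(w) ≠ 0 and S(w') ≠ 0, if there exist a word p and words w₁, w₂ with w = p·w₁, w' = p·w₂ and |w₁| + |w₂| ≤ c, then ℓ(S(w)·S(w')⁻¹) ≤ C. Then for every minimal linear representation (u, μ, v) of S, the set Ω = { u·μ(w) : w ∈ X* } ⊆ K^{1×n} is contained in a finite union of vector subspaces of dimension at most 1. -/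

import Mathlib

/-- Product of the matrices `μ x` along the word `w`. -/
def wordProd {X K : Type*} [Semiring K] {n : ℕ} (μ : X → Matrix (Fin n) (Fin n) K)
    (w : List X) : Matrix (Fin n) (Fin n) K :=
  (w.map μ).prod

/-- `(u, μ, v)` is a linear representation of the series `S : X* → K`. -/
def IsLinRep {X K : Type*} [Semiring K] {n : ℕ} (S : List X → K)
    (u : Fin n → K) (μ : X → Matrix (Fin n) (Fin n) K) (v : Fin n → K) : Prop :=
  ∀ w : List X, S w = dotProduct u (Matrix.mulVec (wordProd μ w) v)

/-- A series is rational if it admits a linear representation. -/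
def IsRational {X K : Type*} [Semiring K] (S : List X → K) : Prop :=
  ∃ (n : ℕ) (u : Fin n → K) (μ : X → Matrix (Fin n) (Fin n) K) (v : Fin n → K),
    IsLinRep S u μ v

/-- `p` is an accepting path for the word `w` in the weighted automaton associated to
`(u, μ, v)`. -/
def IsAcceptingPath {X K : Type*} [Semiring K] {n : ℕ}
    (u : Fin n → K) (μ : X → Matrix (Fin n) (Fin n) K) (v : Fin n → K)
    (w : List X) (p : Fin (w.length + 1) → Fin n) : Prop :=
  u (p 0) ≠ 0 ∧
  (∀ i : Fin w.length, μ (w.get i) (p i.castSucc) (p i.succ) ≠ 0) ∧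
  v (p (Fin.last w.length)) ≠ 0

/-- The linear representation `(u, μ, v)` is unambiguous: every word labels at most one
accepting path. -/
def IsUnambiguous {X K : Type*} [Semiring K] {n : ℕ}
    (u : Fin n → K) (μ : X → Matrix (Fin n) (Fin n) K) (v : Fin n → K) : Prop :=
  ∀ (w : List X) (p q : Fin (w.length + 1) → Fin n),
    IsAcceptingPath u μ v w p → IsAcceptingPath u μ v w q → p = q

/-- `S` is a Pólya series: its nonzero coefficients lie in a finitely generated subgroup
of `Kˣ`. -/
def IsPolya {X K : Type*} [Field K] (S : List X → K) : Prop :=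
  ∃ G : Subgroup Kˣ, G.FG ∧ ∀ w : List X, S w = 0 ∨ ∃ g ∈ G, (g : K) = S w

/-- The linear representation is deterministic: at most one initial state, and every row
of each `μ x` has at most one nonzero entry. -/
def IsDeterministic {X K : Type*} [Semiring K] {n : ℕ}
    (u : Fin n → K) (μ : X → Matrix (Fin n) (Fin n) K) : Prop :=
  (∀ i j : Fin n, u i ≠ 0 → u j ≠ 0 → i = j) ∧
  ∀ (x : X) (p q q' : Fin n), μ x p q ≠ 0 → μ x p q' ≠ 0 → q = q'

/-- Minimal linear representation: no linear representation of `S` has smaller rank. -/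
def IsMinimalRep {X K : Type*} [Semiring K] {n : ℕ} (S : List X → K)
    (u : Fin n → K) (μ : X → Matrix (Fin n) (Fin n) K) (v : Fin n → K) : Prop :=
  IsLinRep S u μ v ∧
  ∀ (m : ℕ) (u' : Fin m → K) (μ' : X → Matrix (Fin m) (Fin m) K) (v' : Fin m → K),
    IsLinRep S u' μ' v' → n ≤ m

/-- The set `Ω = {u · μ(w) : w ∈ X*}` is contained in a finite union of subspaces of
dimension at most 1, i.e. the linear hull has dimension at most 1. -/
def HullDimLE1 {X K : Type*} [Field K] {n : ℕ}
    (u : Fin n → K) (μ : X → Matrix (Fin n) (Fin n) K) : Prop :=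
  ∃ (k : ℕ) (W : Fin k → Submodule K (Fin n → K)),
    (∀ i, Module.finrank K (W i) ≤ 1) ∧
    ∀ w : List X, ∃ i, Matrix.vecMul u (wordProd μ w) ∈ W i

/-!
Minimality forces the vectors `μ(w) v` to span `Kⁿ`: otherwise restricting `μ` to their span
gives a representation of smaller rank. Hence finitely many of them, `μ(yᵢ) v`, already span,
and `r ↦ (r · μ(yᵢ) v)ᵢ` is injective; it sends `u μ(w)` to `(S(w yᵢ))ᵢ`. Two nonzero entries
`S(w yᵢ)`, `S(w yⱼ)` share the prefix `w` and differ by suffixes of bounded length, so by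
bounded variation their ratio lies in the finite set `{g : ℓ g ≤ C}`. Thus `(S(w yᵢ))ᵢ` is a
multiple of one of finitely many vectors with entries in `{0} ∪ {g : ℓ g ≤ C}`, and `u μ(w)`
lies on the preimage of the line it spans.
-/

open Matrix Module Submodule

section Words

variable {X K : Type*} [Semiring K] {n : ℕ} (μ : X → Matrix (Fin n) (Fin n) K)

lemma wordProd_nil : wordProd μ [] = 1 := rfl

lemma wordProd_cons (x : X) (w : List X) : wordProd μ (x :: w) = μ x * wordProd μ w :=
  List.prod_cons

lemma wordProd_append (w w' : List X) :
    wordProd μ (w ++ w') = wordProd μ w * wordProd μ w' := by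
  simp [wordProd]

end Words

section Representations

variable {X K : Type*}

lemma IsLinRep.apply_append [CommSemiring K] {n : ℕ} {S : List X → K} {u : Fin n → K}
    {μ : X → Matrix (Fin n) (Fin n) K} {v : Fin n → K} (h : IsLinRep S u μ v) (w w' : List X) :
    S (w ++ w') = (u ᵥ* wordProd μ w) ⬝ᵥ (wordProd μ w' *ᵥ v) := by
  rw [h, wordProd_append, ← mulVec_mulVec, dotProduct_mulVec]

lemma isLinRep_toMatrix [CommSemiring K] {V : Type*} [AddCommMonoid V] [Module K V] {m : ℕ}
    (b : Basis (Fin m) K V) (f : X → Module.End K V) (φ : V →ₗ[K] K) (z : V) :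
    IsLinRep (fun w => φ ((w.map f).prod z)) (fun j => φ (b j))
      (fun x => LinearMap.toMatrix b b (f x)) (b.repr z) := by
  intro w
  have hprod : wordProd (fun x => LinearMap.toMatrix b b (f x)) w
      = LinearMap.toMatrix b b (w.map f).prod := by
    induction w with
    | nil => exact (LinearMap.toMatrix_one b).symm
    | cons x w ih => rw [wordProd_cons, ih, List.map_cons, List.prod_cons, LinearMap.toMatrix_mul]
  dsimp only
  rw [hprod, LinearMap.toMatrix_mulVec_repr]
  conv_lhs => rw [← b.sum_repr ((w.map f).prod z)]
  simp only [map_sum, map_smul, smul_eq_mul, dotProduct, mul_comm]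

lemma coe_prod_restrict_mulVecLin_apply [CommSemiring K] {n : ℕ}
    (μ : X → Matrix (Fin n) (Fin n) K) {V : Submodule K (Fin n → K)}
    (hV : ∀ x, ∀ z ∈ V, μ x *ᵥ z ∈ V) (w : List X) (z : V) :
    ((w.map fun x => (μ x).mulVecLin.restrict fun z hz => hV x z hz).prod z : Fin n → K)
      = wordProd μ w *ᵥ z := by
  induction w with
  | nil => simp [wordProd_nil]
  | cons x w ih =>
    rw [List.map_cons, List.prod_cons, Module.End.mul_apply, wordProd_cons, ← mulVec_mulVec, ← ih]
    rfl

variable [Field K] {n : ℕ} {S : List X → K} {u : Fin n → K}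
    {μ : X → Matrix (Fin n) (Fin n) K} {v : Fin n → K}

lemma IsMinimalRep.le_finrank (hmin : IsMinimalRep S u μ v) {V : Submodule K (Fin n → K)}
    (hV : ∀ x, ∀ z ∈ V, μ x *ᵥ z ∈ V) (hv : v ∈ V) : n ≤ finrank K V := by
  have hS : S = fun w => (dotProductBilin K K u).comp V.subtype
      ((w.map fun x => (μ x).mulVecLin.restrict fun z hz => hV x z hz).prod ⟨v, hv⟩) :=
    funext fun w => by simp [hmin.1 w, coe_prod_restrict_mulVecLin_apply]
  exact hmin.2 _ _ _ _ (hS ▸ isLinRep_toMatrix (finBasis K V) _ _ _)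

lemma IsMinimalRep.span_wordProd_mulVec_eq_top (hmin : IsMinimalRep S u μ v) :
    span K (Set.range fun w => wordProd μ w *ᵥ v) = ⊤ := by
  set V := span K (Set.range fun w => wordProd μ w *ᵥ v)
  have hV : ∀ x, V ≤ V.comap (μ x).mulVecLin := fun x =>
    span_le.2 <| by
      rintro _ ⟨w, rfl⟩
      exact subset_span ⟨x :: w, by simp [wordProd_cons, mulVec_mulVec]⟩
  have hv : v ∈ V := subset_span ⟨[], by simp [wordProd_nil]⟩
  exact eq_top_of_finrank_eq <|
    (finrank_le V).antisymm (by simpa using hmin.le_finrank (fun x z hz => hV x hz) hv)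

lemma IsMinimalRep.exists_words_span_eq_top (hmin : IsMinimalRep S u μ v) :
    ∃ (k : ℕ) (y : Fin k → List X), span K (Set.range fun i => wordProd μ (y i) *ᵥ v) = ⊤ := by
  obtain ⟨f, hf, hspan, -⟩ :=
    exists_fun_fin_finrank_span_eq K (Set.range fun w => wordProd μ w *ᵥ v)
  choose y hy using hf
  refine ⟨_, y, ?_⟩
  rw [funext hy, hspan, hmin.span_wordProd_mulVec_eq_top]

end Representations

lemma mulVec_injective_of_span_eq_top {K ι : Type*} [CommRing K] {n : ℕ} {b : ι → Fin n → K}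
    (hb : span K (Set.range b) = ⊤) : Function.Injective (of b).mulVecLin := by
  rw [← LinearMap.ker_eq_bot, LinearMap.ker_eq_bot']
  intro r hr
  have : dotProductBilin K K r = 0 := LinearMap.ext_on_range hb fun i => by
    simpa [mulVec, dotProduct_comm] using congrFun hr i
  exact dotProduct_eq_zero_iff.1 fun z => LinearMap.congr_fun this z

lemma HullDimLE1.of_injective {X K ι : Type*} [Field K] [Finite ι] {n : ℕ} {u : Fin n → K}
    {μ : X → Matrix (Fin n) (Fin n) K} {φ : (Fin n → K) →ₗ[K] (ι → K)}
    (hφ : Function.Injective φ) {F : Set K} (hF : F.Finite)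
    (h : ∀ w, ∃ (a : K) (ρ : ι → F), φ (u ᵥ* wordProd μ w) = a • fun i => (ρ i : K)) :
    HullDimLE1 u μ := by
  have := hF.to_subtype
  obtain ⟨k, ⟨e⟩⟩ := Finite.exists_equiv_fin (ι → F)
  refine ⟨k, fun j => (K ∙ fun i => (e.symm j i : K)).comap φ, fun j => ?_, fun w => ?_⟩
  · calc finrank K ((K ∙ fun i => (e.symm j i : K)).comap φ)
        ≤ finrank K (K ∙ fun i => (e.symm j i : K)) :=
          LinearMap.finrank_le_finrank_of_injective (f := φ.restrict fun _ hz => hz)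
            fun _ _ h => Subtype.ext (hφ (congrArg Subtype.val h))
      _ ≤ 1 := by simpa using finrank_span_le_card ({fun i => (e.symm j i : K)} : Set (ι → K))
  · obtain ⟨a, ρ, hρ⟩ := h w
    exact ⟨e ρ, by simpa [hρ] using smul_mem _ a (mem_span_singleton_self _)⟩

lemma exists_smul_of_ratio_mem {K ι : Type*} [CommMonoidWithZero K] (s : ι → K) {F : Set K}
    (h0 : 0 ∈ F) (hratio : ∀ i j, s j ≠ 0 → ∃ a ∈ F, s i = a * s j) :
    ∃ (a : K) (ρ : ι → F), s = a • fun i => (ρ i : K) := by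
  by_cases hs : ∀ i, s i = 0
  · exact ⟨0, fun _ => ⟨0, h0⟩, funext fun i => by simp [hs i]⟩
  obtain ⟨j, hj⟩ := not_forall.1 hs
  choose ρ hρF hρ using fun i => hratio i j hj
  exact ⟨s j, fun i => ⟨ρ i, hρF i⟩, funext fun i => by simp [hρ i, mul_comm]⟩

section Variation

variable {K : Type*} [Field K]

def lengthBall (G : Subgroup Kˣ) (ℓ : G → NNReal) (C : NNReal) : Set K :=
  (fun g : G => ((g : Kˣ) : K)) '' {g | ℓ g ≤ C}

lemma exists_ratio_mem_lengthBall {X : Type*} {G : Subgroup Kˣ} {ℓ : G → NNReal}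
    {S : List X → K} {c : ℕ} {C : NNReal}
    (hSG : ∀ w : List X, S w = 0 ∨ ∃ g ∈ G, (g : K) = S w)
    (hC : ∀ (w w' : List X) (g g' : G),
      ((g : Kˣ) : K) = S w → ((g' : Kˣ) : K) = S w' →
      (∃ p w₁ w₂ : List X, w = p ++ w₁ ∧ w' = p ++ w₂ ∧ w₁.length + w₂.length ≤ c) →
      ℓ (g * g'⁻¹) ≤ C)
    {w y y' : List X} (hlen : y.length + y'.length ≤ c) (hy' : S (w ++ y') ≠ 0) :
    ∃ a ∈ insert 0 (lengthBall G ℓ C), S (w ++ y) = a * S (w ++ y') := by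
  by_cases hy : S (w ++ y) = 0
  · exact ⟨0, Set.mem_insert _ _, by simp [hy]⟩
  obtain ⟨g, hgG, hg⟩ := (hSG _).resolve_left hy
  obtain ⟨g', hg'G, hg'⟩ := (hSG _).resolve_left hy'
  refine ⟨_, Set.mem_insert_of_mem _ ⟨⟨g, hgG⟩ * ⟨g', hg'G⟩⁻¹,
    hC _ _ _ _ hg hg' ⟨w, y, y', rfl, rfl, hlen⟩, rfl⟩, ?_⟩
  simp [← hg, ← hg']

end Variation

theorem bounded_variation_hull_general {K X : Type*} [Field K]
    (G : Subgroup Kˣ) (ℓ : G → NNReal)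
    (hfin : ∀ C : NNReal, {g : G | ℓ g ≤ C}.Finite)
    (S : List X → K)
    (hSG : ∀ w : List X, S w = 0 ∨ ∃ g ∈ G, (g : K) = S w)
    (hbv : ∀ c : ℕ, ∃ C : NNReal, ∀ (w w' : List X) (g g' : G),
      ((g : Kˣ) : K) = S w → ((g' : Kˣ) : K) = S w' →
      (∃ p w₁ w₂ : List X, w = p ++ w₁ ∧ w' = p ++ w₂ ∧ w₁.length + w₂.length ≤ c) →
      ℓ (g * g'⁻¹) ≤ C) :
    ∀ (n : ℕ) (u : Fin n → K) (μ : X → Matrix (Fin n) (Fin n) K) (v : Fin n → K),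
      IsMinimalRep S u μ v → HullDimLE1 u μ := by
  intro n u μ v hmin
  obtain ⟨k, y, hspan⟩ := hmin.exists_words_span_eq_top
  set L := Finset.univ.sup fun i => (y i).length
  have hlen : ∀ i j, (y i).length + (y j).length ≤ 2 * L := fun i j => by
    have := Finset.le_sup (f := fun i => (y i).length) (Finset.mem_univ i)
    have := Finset.le_sup (f := fun i => (y i).length) (Finset.mem_univ j)
    omega
  obtain ⟨C, hC⟩ := hbv (2 * L)
  refine HullDimLE1.of_injective (F := insert 0 (lengthBall G ℓ C))
    (mulVec_injective_of_span_eq_top hspan) (((hfin C).image _).insert 0) fun w => ?_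
  have hfuture : (of fun i => wordProd μ (y i) *ᵥ v).mulVecLin (u ᵥ* wordProd μ w)
      = fun i => S (w ++ y i) := funext fun i => by
    show (wordProd μ (y i) *ᵥ v) ⬝ᵥ (u ᵥ* wordProd μ w) = _
    rw [hmin.1.apply_append, dotProduct_comm]
  rw [hfuture]
  exact exists_smul_of_ratio_mem _ (Set.mem_insert _ _) fun i j hj =>
    exists_ratio_mem_lengthBall hSG hC (hlen i j) hj

/-- If a rational series with values in `G ∪ {0}` has bounded `ℓ`-variation for a proper
length function `ℓ` on `G`, then the linear hull of every minimal linear representation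
has dimension at most `1`. -/
theorem bounded_variation_hull {K X : Type*} [Field K] [Fintype X] [Nonempty X]
    (G : Subgroup Kˣ) (ℓ : G → NNReal)
    (hl1 : ℓ 1 = 0) (hlmul : ∀ g h : G, ℓ (g * h) ≤ ℓ g + ℓ h)
    (hlinv : ∀ g : G, ℓ g⁻¹ = ℓ g)
    (hfin : ∀ C : NNReal, {g : G | ℓ g ≤ C}.Finite)
    (S : List X → K) (hrat : IsRational S)
    (hSG : ∀ w : List X, S w = 0 ∨ ∃ g ∈ G, (g : K) = S w)
    (hbv : ∀ c : ℕ, ∃ C : NNReal, ∀ (w w' : List X) (g g' : G),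
      ((g : Kˣ) : K) = S w → ((g' : Kˣ) : K) = S w' →
      (∃ p w₁ w₂ : List X, w = p ++ w₁ ∧ w' = p ++ w₂ ∧ w₁.length + w₂.length ≤ c) →
      ℓ (g * g'⁻¹) ≤ C) :
    ∀ (n : ℕ) (u : Fin n → K) (μ : X → Matrix (Fin n) (Fin n) K) (v : Fin n → K),
      IsMinimalRep S u μ v → HullDimLE1 u μ :=
  bounded_variation_hull_general G ℓ hfin S hSG hbv
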